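/- arXiv:1703.05619 — 3 statements merged into one kernel-verified Lean document; each statement's English description precedes it below -/
import Mathlib

section
/- Let ω be a strictly positive symmetric sequence with ω_0 = 1, α strictly positive symmetric with α_0 = 1 and non-increasing for n ≥ 0. For k ∈ ℕ₀ set Δ_k = max_{0≤j≤k} ω_j/α_j and δ_k = (2k+1) Δ_k · log(Δ_k ∨ (k+3))/log(k+3). For n ∈ ℕ set N_n = (inf{1 ≤ j ≤ n : α_j/(2j+1) < log(n+3) ω_j⁺/n} - 1) ∧ n with ω_j⁺ = max_{0≤i≤j} ω_i. Then δ_j ≤ n for all j ∈ {0,…,N_n}. -/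
/-- Lemma B2(a): `δ_j ≤ n` for all `j ∈ {0,…,N_n}`. -/
theorem delta_le_n
    (ω α : ℤ → ℝ)
    (hωpos : ∀ j, 0 < ω j) (hωsymm : ∀ j, ω (-j) = ω j) (hω0 : ω 0 = 1)
    (hαpos : ∀ j, 0 < α j) (hαsymm : ∀ j, α (-j) = α j) (hα0 : α 0 = 1)
    (hαmono : Antitone fun n : ℕ => α n)
    (Δ δ ωplus : ℕ → ℝ)
    (hΔ : ∀ k, Δ k = (Finset.range (k + 1)).sup'
      (Finset.nonempty_range_iff.mpr (Nat.succ_ne_zero k)) (fun j => ω j / α j))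
    (hδ : ∀ k, δ k = (2 * k + 1) * Δ k
      * Real.log (max (Δ k) (k + 3)) / Real.log (k + 3))
    (hωplus : ∀ k, ωplus k = (Finset.range (k + 1)).sup'
      (Finset.nonempty_range_iff.mpr (Nat.succ_ne_zero k)) (fun j => ω j))
    (n : ℕ) (hn : 0 < n)
    (N : ℕ)
    (hN : N = (sInf ({j : ℕ | 1 ≤ j ∧ j ≤ n
      ∧ α j / (2 * j + 1) < Real.log (n + 3) * ωplus j / n} ∪ {n + 1}) - 1) ⊓ n) :
    ∀ j : ℕ, j ≤ N → δ j ≤ n := by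
  have hlog : ∀ x : ℝ, 3 ≤ x → 1 < Real.log x := by
    intro x hx
    rw [Real.lt_log_iff_exp_lt (by linarith)]
    calc Real.exp 1 < 2.7182818286 := Real.exp_one_lt_d9
      _ < 3 := by norm_num
      _ ≤ x := hx
  have hn1 : (1:ℝ) ≤ n := by exact_mod_cast hn
  intro j hj
  have hΔ1 : ∀ k : ℕ, 1 ≤ Δ k := by
    intro k
    rw [hΔ]
    have h0 : (0:ℕ) ∈ Finset.range (k+1) := Finset.mem_range.mpr (Nat.succ_pos k)
    calc (1:ℝ) = ω ((0:ℕ):ℤ) / α ((0:ℕ):ℤ) := by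
          rw [Nat.cast_zero, hω0, hα0]; norm_num
      _ ≤ _ := Finset.le_sup' (fun i : ℕ => ω i / α i) h0
  rcases Nat.eq_zero_or_pos j with hj0 | hj1
  · -- j = 0
    subst hj0
    have hΔ0 : Δ 0 = 1 := by
      rw [hΔ]
      simp [hω0, hα0]
    rw [hδ, hΔ0]
    have hmax : max (1:ℝ) ((0:ℕ) + 3) = 3 := by norm_num
    rw [hmax]
    have hl3 : Real.log ((0:ℕ) + (3:ℝ)) = Real.log 3 := by norm_num
    have : (2 * ((0:ℕ):ℝ) + 1) * 1 * Real.log 3 / Real.log ((0:ℕ) + (3:ℝ)) = 1 := by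
      rw [hl3]
      have := hlog 3 (le_refl _)
      field_simp
      norm_num
    push_cast at this ⊢
    rw [this]
    exact hn1
  · -- j ≥ 1
    have hjn : j ≤ n := le_trans hj (hN ▸ min_le_right _ _)
    have hjm : j < sInf ({j : ℕ | 1 ≤ j ∧ j ≤ n
        ∧ α j / (2 * j + 1) < Real.log (n + 3) * ωplus j / n} ∪ {n + 1}) := by
      have h1 : j ≤ sInf ({j : ℕ | 1 ≤ j ∧ j ≤ n
          ∧ α j / (2 * j + 1) < Real.log (n + 3) * ωplus j / n} ∪ {n + 1}) - 1 :=
        le_trans hj (hN ▸ min_le_left _ _)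
      omega
    have hnotmem : j ∉ ({j : ℕ | 1 ≤ j ∧ j ≤ n
        ∧ α j / (2 * j + 1) < Real.log (n + 3) * ωplus j / n} ∪ {n + 1}) :=
      fun h => absurd (Nat.sInf_le h) (not_le.mpr hjm)
    have hkey0 : Real.log ((n:ℝ) + 3) * ωplus j / n ≤ α j / (2 * (j:ℝ) + 1) := by
      by_contra h
      exact hnotmem (Or.inl ⟨hj1, hjn, not_le.mp h⟩)
    have hαj : (0:ℝ) < α j := hαpos _
    have h2j : (0:ℝ) < 2 * (j:ℝ) + 1 := by positivity
    have hnpos : (0:ℝ) < n := by exact_mod_cast hn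
    have hωp : (0:ℝ) < ωplus j := by
      rw [hωplus]
      have h0 : (0:ℕ) ∈ Finset.range (j+1) := Finset.mem_range.mpr (Nat.succ_pos j)
      calc (0:ℝ) < ω ((0:ℕ):ℤ) := hωpos _
        _ ≤ _ := Finset.le_sup' (fun i : ℕ => ω i) h0
    have hLn : 1 < Real.log ((n:ℝ) + 3) := hlog _ (by linarith)
    have hL3 : 1 < Real.log ((j:ℝ) + 3) := hlog _ (by linarith [(Nat.cast_nonneg j : (0:ℝ) ≤ j)])
    have hΔle : Δ j ≤ ωplus j / α j := by
      rw [hΔ]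
      apply Finset.sup'_le
      intro i hi
      have hi' : i ≤ j := Nat.lt_succ_iff.mp (Finset.mem_range.mp hi)
      have hαji : α (i:ℤ) ≤ α (j:ℤ) ∨ True := Or.inr trivial
      have hαij : α (j:ℤ) ≤ α (i:ℤ) := hαmono hi'
      have hωi : ω (i:ℤ) ≤ ωplus j := by
        rw [hωplus]; exact Finset.le_sup' (fun i : ℕ => ω i) hi
      exact div_le_div₀ hωp.le hωi hαj hαij
    have hT : (2 * (j:ℝ) + 1) * Δ j * Real.log ((n:ℝ) + 3) ≤ n := by
      rw [div_le_div_iff₀ hnpos h2j] at hkey0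
      have h2 : (2 * (j:ℝ) + 1) * (ωplus j / α j) * Real.log ((n:ℝ) + 3) ≤ n := by
        rw [show (2 * (j:ℝ) + 1) * (ωplus j / α j) * Real.log ((n:ℝ) + 3)
            = ((2 * (j:ℝ) + 1) * ωplus j * Real.log ((n:ℝ) + 3)) / α j from by ring,
          div_le_iff₀ hαj]
        nlinarith [hkey0]
      calc (2 * (j:ℝ) + 1) * Δ j * Real.log ((n:ℝ) + 3)
          ≤ (2 * (j:ℝ) + 1) * (ωplus j / α j) * Real.log ((n:ℝ) + 3) := by
            apply mul_le_mul_of_nonneg_right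
              (mul_le_mul_of_nonneg_left hΔle h2j.le) (by linarith)
        _ ≤ n := h2
    have hTn : (2 * (j:ℝ) + 1) * Δ j ≤ n := by
      nlinarith [mul_pos h2j (lt_of_lt_of_le one_pos (hΔ1 j))]
    rw [hδ]
    rcases le_or_gt (Δ j) ((j:ℝ) + 3) with hc | hc
    · rw [max_eq_right hc, mul_div_assoc,
        div_self (ne_of_gt (by linarith : (0:ℝ) < Real.log ((j:ℝ) + 3))), mul_one]
      exact hTn
    · rw [max_eq_left hc.le]
      have hΔn : Real.log (Δ j) ≤ Real.log ((n:ℝ) + 3) := by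
        apply Real.log_le_log (by linarith [hΔ1 j])
        nlinarith [hΔ1 j, h2j]
      rw [div_le_iff₀ (by linarith : (0:ℝ) < Real.log ((j:ℝ) + 3))]
      have h2 : (2 * (j:ℝ) + 1) * Δ j * Real.log (Δ j)
          ≤ (2 * (j:ℝ) + 1) * Δ j * Real.log ((n:ℝ) + 3) := by
        apply mul_le_mul_of_nonneg_left hΔn (by nlinarith [hΔ1 j])
      nlinarith [mul_nonneg hnpos.le (by linarith : (0:ℝ) ≤ Real.log ((j:ℝ) + 3) - 1)]
end

section
/- Let ω_j = |j|^{2s} for j ≠ 0, ω_0 = 1, γ_j = |j|^{2p} for j ≠ 0 (γ_0 = 1), α_j = |j|^{-2a} for j ≠ 0 (α_0 = 1), with p ≥ s ≥ 0 and a > 1/2. Then with Ψ_n = min_{k≥0} max{ ω_k/γ_k, Σ_{0≤|j|≤k} ω_j/(n α_j) }, there exist constants 0 < c ≤ C such that c·n^{-2(p-s)/(2p+2a+1)} ≤ Ψ_n ≤ C·n^{-2(p-s)/(2p+2a+1)} for all n ≥ 1. -/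
/-!
With `ω/γ = k^{-β}` (`β = 2(p-s)`) and `ω/α = |j|^q` (`q = 2s+2a`), the bias at cut-off `k` is
`k^{-β}` and the variance is `∑_{|j| ≤ k} |j|^q / n ≍ k^{q+1}/n`. At `x = n^{1/(β+q+1)}` both equal
`n^{-β/(β+q+1)}`. Cutting off at `⌈x⌉` gives the upper bound; for the lower bound, a cut-off
`k ≤ x` has bias `≥ x^{-β}`, while `k > x` has variance `≥ (k/2)^{q+1}/n > (x/2)^{q+1}/n`.
-/

open Real Finset

noncomputable def polyWeight (t : ℝ) (j : ℤ) : ℝ := if j = 0 then 1 else |(j : ℝ)| ^ t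

lemma polyWeight_of_ne_zero (t : ℝ) {j : ℤ} (hj : j ≠ 0) : polyWeight t j = |(j : ℝ)| ^ t :=
  if_neg hj

lemma polyWeight_pos (t : ℝ) (j : ℤ) : 0 < polyWeight t j := by
  unfold polyWeight; split_ifs <;> positivity

lemma polyWeight_div (t u : ℝ) (j : ℤ) :
    polyWeight t j / polyWeight u j = polyWeight (t - u) j := by
  rcases eq_or_ne j 0 with rfl | hj
  · simp [polyWeight]
  · simp only [polyWeight_of_ne_zero _ hj]
    rw [← rpow_sub (abs_pos.mpr (Int.cast_ne_zero.mpr hj))]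

lemma polyWeight_natCast (t : ℝ) {k : ℕ} (hk : k ≠ 0) : polyWeight t k = (k : ℝ) ^ t := by
  rw [polyWeight_of_ne_zero _ (by exact_mod_cast hk)]
  simp

lemma polyWeight_le_of_abs_le {t : ℝ} (ht : 0 ≤ t) {k : ℕ} (hk : 1 ≤ k) {j : ℤ}
    (hj : |j| ≤ k) : polyWeight t j ≤ (k : ℝ) ^ t := by
  rcases eq_or_ne j 0 with rfl | hj0
  · simpa [polyWeight] using one_le_rpow (by exact_mod_cast hk : (1 : ℝ) ≤ k) ht
  · rw [polyWeight_of_ne_zero _ hj0]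
    have : |(j : ℝ)| ≤ k := by rw [← Int.cast_abs]; exact_mod_cast hj
    gcongr

lemma sum_polyWeight_le {t : ℝ} (ht : 0 ≤ t) {k : ℕ} (hk : 1 ≤ k) :
    ∑ j ∈ Icc (-(k : ℤ)) k, polyWeight t j ≤ 3 * (k : ℝ) ^ (t + 1) := by
  have hcard : (#(Icc (-(k : ℤ)) k) : ℝ) = 2 * k + 1 := by
    rw [Int.card_Icc, show (k + 1 - -k : ℤ).toNat = 2 * k + 1 by omega]
    push_cast; ring
  have hk' : (1 : ℝ) ≤ k := by exact_mod_cast hk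
  calc ∑ j ∈ Icc (-(k : ℤ)) k, polyWeight t j ≤ #(Icc (-(k : ℤ)) k) • (k : ℝ) ^ t :=
        sum_le_card_nsmul _ _ _ fun j hj ↦
          polyWeight_le_of_abs_le ht hk (abs_le.mpr (mem_Icc.mp hj))
    _ = (2 * k + 1) * (k : ℝ) ^ t := by rw [nsmul_eq_mul, hcard]
    _ ≤ 3 * k * (k : ℝ) ^ t := by gcongr; linarith
    _ = 3 * (k : ℝ) ^ (t + 1) := by rw [rpow_add_one (by positivity)]; ring

/-- Only the top half `⌈k/2⌉ ≤ j ≤ k` of the range is used: about `k/2` terms, each `≥ (k/2)^t`. -/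
lemma half_rpow_le_sum_polyWeight {t : ℝ} (ht : 0 ≤ t) {k : ℕ} (hk : 1 ≤ k) :
    ((k : ℝ) / 2) ^ (t + 1) ≤ ∑ j ∈ Icc (-(k : ℤ)) k, polyWeight t j := by
  set m := (k + 1) / 2
  have hcard : (#(Icc (m : ℤ) k) : ℝ) = k + 1 - m := by
    rw [Int.card_Icc, show ((k : ℤ) + 1 - m).toNat = k + 1 - m by omega,
      Nat.cast_sub (by omega)]
    push_cast; ring
  have hm : (k : ℝ) / 2 ≤ m := by
    rw [div_le_iff₀ two_pos]; exact_mod_cast (by omega : k ≤ m * 2)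
  have hm' : (m : ℝ) ≤ (k + 1) / 2 := by
    rw [le_div_iff₀ two_pos]; exact_mod_cast (by omega : m * 2 ≤ k + 1)
  have hterm : ∀ j ∈ Icc (m : ℤ) k, ((k : ℝ) / 2) ^ t ≤ polyWeight t j := by
    intro j hj
    have hmj := (mem_Icc.mp hj).1
    rw [polyWeight_of_ne_zero _ (by omega), abs_of_pos (by exact_mod_cast (by omega : 0 < j))]
    gcongr
    exact hm.trans (by exact_mod_cast hmj)
  calc ((k : ℝ) / 2) ^ (t + 1) = (k / 2) * ((k : ℝ) / 2) ^ t := by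
        rw [rpow_add_one (by positivity)]; ring
    _ ≤ #(Icc (m : ℤ) k) • ((k : ℝ) / 2) ^ t := by
        rw [nsmul_eq_mul, hcard]; gcongr; linarith
    _ ≤ ∑ j ∈ Icc (m : ℤ) k, polyWeight t j := card_nsmul_le_sum _ _ _ hterm
    _ ≤ ∑ j ∈ Icc (-(k : ℤ)) k, polyWeight t j :=
        sum_le_sum_of_subset_of_nonneg (Icc_subset_Icc (by omega) le_rfl)
          fun j _ _ ↦ (polyWeight_pos t j).le

lemma rpow_one_div_rpow_neg {x : ℝ} (hx : 0 ≤ x) {β q : ℝ} (hD : 0 < β + q + 1) :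
    (x ^ (1 / (β + q + 1))) ^ (-β) = x ^ (-(β / (β + q + 1))) := by
  rw [← rpow_mul hx]; congr 1; field_simp

lemma rpow_one_div_rpow_add_one_div {x : ℝ} (hx : 0 < x) {β q : ℝ} (hD : 0 < β + q + 1) :
    (x ^ (1 / (β + q + 1))) ^ (q + 1) / x = x ^ (-(β / (β + q + 1))) := by
  rw [← rpow_mul hx.le, ← rpow_sub_one hx.ne']; congr 1; field_simp; ring

noncomputable def cutoffRisk (β q : ℝ) (n k : ℕ) : ℝ :=
  max (polyWeight (-β) k) (∑ j ∈ Icc (-(k : ℤ)) k, polyWeight q j / n)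

section cutoffRisk

variable {β q : ℝ} {n : ℕ}

lemma le_cutoffRisk (hβ : 0 ≤ β) (hq : 0 ≤ q) (hn : 1 ≤ n) (k : ℕ) :
    2 ^ (-(q + 1)) * (n : ℝ) ^ (-(β / (β + q + 1))) ≤ cutoffRisk β q n k := by
  have hD : 0 < β + q + 1 := by linarith
  have hn' : (1 : ℝ) ≤ n := by exact_mod_cast hn
  set x := (n : ℝ) ^ (1 / (β + q + 1))
  have hx : 1 ≤ x := one_le_rpow hn' (by positivity)
  have hc : (2 : ℝ) ^ (-(q + 1)) ≤ 1 := rpow_le_one_of_one_le_of_nonpos one_le_two (by linarith)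
  have hrate : (n : ℝ) ^ (-(β / (β + q + 1))) ≤ 1 :=
    rpow_le_one_of_one_le_of_nonpos hn' (neg_nonpos.mpr (by positivity))
  rcases Nat.eq_zero_or_pos k with rfl | hk
  · refine le_max_of_le_left ?_
    simpa [polyWeight] using mul_le_one₀ hc (by positivity) hrate
  rcases le_or_gt (k : ℝ) x with hkx | hxk
  · refine le_max_of_le_left ?_
    calc 2 ^ (-(q + 1)) * (n : ℝ) ^ (-(β / (β + q + 1)))
        ≤ (n : ℝ) ^ (-(β / (β + q + 1))) := mul_le_of_le_one_left (by positivity) hc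
      _ = x ^ (-β) := (rpow_one_div_rpow_neg (by positivity) hD).symm
      _ ≤ (k : ℝ) ^ (-β) := rpow_le_rpow_of_nonpos (by positivity) hkx (by linarith)
      _ = polyWeight (-β) k := (polyWeight_natCast _ hk.ne').symm
  · refine le_max_of_le_right ?_
    calc 2 ^ (-(q + 1)) * (n : ℝ) ^ (-(β / (β + q + 1)))
        = (x / 2) ^ (q + 1) / n := by
          rw [← rpow_one_div_rpow_add_one_div (by positivity) hD,
            div_rpow (by positivity) zero_le_two, rpow_neg zero_le_two]
          ring
      _ ≤ ((k : ℝ) / 2) ^ (q + 1) / n := by gcongr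
      _ ≤ (∑ j ∈ Icc (-(k : ℤ)) k, polyWeight q j) / n := by
          gcongr; exact half_rpow_le_sum_polyWeight hq hk
      _ = ∑ j ∈ Icc (-(k : ℤ)) k, polyWeight q j / n := sum_div _ _ _

lemma exists_cutoffRisk_le (hβ : 0 ≤ β) (hq : 0 ≤ q) (hn : 1 ≤ n) :
    ∃ k, cutoffRisk β q n k ≤ 3 * 2 ^ (q + 1) * (n : ℝ) ^ (-(β / (β + q + 1))) := by
  have hD : 0 < β + q + 1 := by linarith
  have hn' : (1 : ℝ) ≤ n := by exact_mod_cast hn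
  set x := (n : ℝ) ^ (1 / (β + q + 1))
  have hx : 1 ≤ x := one_le_rpow hn' (by positivity)
  set k := ⌈x⌉₊
  have hk : 1 ≤ k := Nat.one_le_iff_ne_zero.mpr (Nat.ceil_pos.mpr (by linarith)).ne'
  have hxk : x ≤ k := Nat.le_ceil x
  have hkx : (k : ℝ) ≤ 2 * x := by linarith [Nat.ceil_lt_add_one (by linarith : 0 ≤ x)]
  have hC : (1 : ℝ) ≤ 3 * 2 ^ (q + 1) := by
    linarith [one_le_rpow (one_le_two : (1 : ℝ) ≤ 2) (by linarith : 0 ≤ q + 1)]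
  refine ⟨k, max_le ?_ ?_⟩
  · calc polyWeight (-β) k = (k : ℝ) ^ (-β) := polyWeight_natCast _ (by omega)
      _ ≤ x ^ (-β) := rpow_le_rpow_of_nonpos (by positivity) hxk (by linarith)
      _ = (n : ℝ) ^ (-(β / (β + q + 1))) := rpow_one_div_rpow_neg (by positivity) hD
      _ ≤ 3 * 2 ^ (q + 1) * (n : ℝ) ^ (-(β / (β + q + 1))) :=
          le_mul_of_one_le_left (by positivity) hC
  · calc ∑ j ∈ Icc (-(k : ℤ)) k, polyWeight q j / n
        = (∑ j ∈ Icc (-(k : ℤ)) k, polyWeight q j) / n := (sum_div _ _ _).symm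
      _ ≤ 3 * (k : ℝ) ^ (q + 1) / n := by gcongr; exact sum_polyWeight_le hq hk
      _ ≤ 3 * (2 * x) ^ (q + 1) / n := by gcongr
      _ = 3 * 2 ^ (q + 1) * (n : ℝ) ^ (-(β / (β + q + 1))) := by
          rw [← rpow_one_div_rpow_add_one_div (by positivity) hD,
            mul_rpow zero_le_two (by positivity)]
          ring

end cutoffRisk

/-- Rate in `n` for the (pol)-(pol) scenario: `Ψ_n ≍ n^{-2(p-s)/(2p+2a+1)}`. -/
theorem rate_psi_pol_pol
    (s p a : ℝ) (hs : 0 ≤ s) (hps : s ≤ p) (ha : 1 / 2 < a)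
    (ω γ α : ℤ → ℝ)
    (hω : ∀ j : ℤ, ω j = if j = 0 then 1 else |(j : ℝ)| ^ (2 * s))
    (hγ : ∀ j : ℤ, γ j = if j = 0 then 1 else |(j : ℝ)| ^ (2 * p))
    (hα : ∀ j : ℤ, α j = if j = 0 then 1 else |(j : ℝ)| ^ (-(2 * a)))
    (Ψ : ℕ → ℝ)
    (hΨ : ∀ n : ℕ, Ψ n = ⨅ k : ℕ, max (ω k / γ k)
      (∑ j ∈ Finset.Icc (-(k : ℤ)) k, ω j / (n * α j))) :
    ∃ c C : ℝ, 0 < c ∧ c ≤ C ∧ ∀ n : ℕ, 1 ≤ n →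
      c * (n : ℝ) ^ (-(2 * (p - s) / (2 * p + 2 * a + 1))) ≤ Ψ n ∧
        Ψ n ≤ C * (n : ℝ) ^ (-(2 * (p - s) / (2 * p + 2 * a + 1))) := by
  obtain rfl : ω = polyWeight (2 * s) := funext hω
  obtain rfl : γ = polyWeight (2 * p) := funext hγ
  obtain rfl : α = polyWeight (-(2 * a)) := funext hα
  have hΨ' : ∀ n, Ψ n = ⨅ k : ℕ, cutoffRisk (2 * (p - s)) (2 * s + 2 * a) n k := by
    intro n
    simp only [hΨ, cutoffRisk, polyWeight_div, div_mul_eq_div_div_swap, sub_neg_eq_add,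
      show 2 * s - 2 * p = -(2 * (p - s)) by ring]
  have hβ : 0 ≤ 2 * (p - s) := by linarith
  have hq : 0 ≤ 2 * s + 2 * a := by linarith
  have hD : 2 * (p - s) + (2 * s + 2 * a) + 1 = 2 * p + 2 * a + 1 := by ring
  refine ⟨2 ^ (-(2 * s + 2 * a + 1)), 3 * 2 ^ (2 * s + 2 * a + 1), by positivity, ?_,
    fun n hn ↦ ⟨?_, ?_⟩⟩
  · obtain ⟨k, hk⟩ := exists_cutoffRisk_le hβ hq (le_refl 1)
    simpa using (le_cutoffRisk hβ hq le_rfl k).trans hk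
  · rw [hΨ', ← hD]
    exact le_ciInf (le_cutoffRisk hβ hq hn)
  · obtain ⟨k, hk⟩ := exists_cutoffRisk_le hβ hq hn
    rw [hΨ', ← hD]
    exact (ciInf_le ⟨_, Set.forall_mem_range.mpr (le_cutoffRisk hβ hq hn)⟩ k).trans hk
end

section
/- Let ω_j = |j|^{2s} (ω_0=1), γ_j = |j|^{2p} (γ_0=1), α_j = |j|^{-2a} (α_0=1) with p > s ≥ 0, a ≥ 0. Then Φ_m = max_{k≥1} { (ω_k/γ_k) · min(1, 1/(m α_k)) } satisfies c·m^{-((p-s)∧a)/a} ≤ Φ_m ≤ C·m^{-((p-s)∧a)/a} for constants 0 < c ≤ C and all m ≥ 1 (when a > 0). -/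
open Real

/-!
After the substitution `b = p - s`, the `k`-th term is `k^(-2b) · min 1 (k^(2a)/m)`. Since
`min 1 t ≤ t^θ` for `θ ∈ [0, 1]`, taking `θ = min b a / a` bounds every term by
`k^(2aθ - 2b) m^(-θ) ≤ m^(-θ)`. Conversely, if `b ≤ a` the term at `k = ⌈m^(1/(2a))⌉` is
`k^(-2b) ≥ 2^(-2b) m^(-b/a)`, and if `a ≤ b` the term at `k = 1` is already `1/m`.
-/

/-- The `k`-th term of `Φ_m`, written with the gap `b = p - s` and evaluated at a real `x`. -/
noncomputable def polPolTerm (b a m x : ℝ) : ℝ :=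
  x ^ (-(2 * b)) * min 1 (x ^ (2 * a) / m)

lemma min_one_le_rpow {t θ : ℝ} (ht : 0 < t) (hθ0 : 0 ≤ θ) (hθ1 : θ ≤ 1) :
    min 1 t ≤ t ^ θ := by
  rcases le_total t 1 with h | h
  · calc min 1 t ≤ t := min_le_right _ _
      _ = t ^ (1 : ℝ) := (rpow_one t).symm
      _ ≤ t ^ θ := rpow_le_rpow_of_exponent_ge ht h hθ1
  · calc min 1 t ≤ 1 := min_le_left _ _
      _ = t ^ (0 : ℝ) := (rpow_zero t).symm
      _ ≤ t ^ θ := rpow_le_rpow_of_exponent_le h hθ0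

lemma exists_pnat_le_two_mul {y : ℝ} (hy : 1 ≤ y) : ∃ n : ℕ+, y ≤ n ∧ (n : ℝ) ≤ 2 * y := by
  have hceil : 0 < ⌈y⌉₊ := Nat.ceil_pos.2 (by linarith)
  refine ⟨⟨⌈y⌉₊, hceil⟩, Nat.le_ceil y, ?_⟩
  have := Nat.ceil_lt_add_one (show 0 ≤ y by linarith)
  simp only [PNat.mk_coe]
  linarith

section polPolTerm

variable {b a m : ℝ}

lemma polPolTerm_le_rpow {x θ : ℝ} (hx : 1 ≤ x) (hm : 0 < m) (hθ0 : 0 ≤ θ) (hθ1 : θ ≤ 1)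
    (hθb : a * θ ≤ b) : polPolTerm b a m x ≤ m ^ (-θ) := by
  have hx0 : 0 < x := by linarith
  calc polPolTerm b a m x ≤ x ^ (-(2 * b)) * (x ^ (2 * a) / m) ^ θ :=
        mul_le_mul_of_nonneg_left (min_one_le_rpow (by positivity) hθ0 hθ1) (by positivity)
    _ = x ^ (2 * (a * θ - b)) * m ^ (-θ) := by
        rw [div_rpow (by positivity) hm.le, ← rpow_mul hx0.le, rpow_neg hm.le, div_eq_mul_inv,
          ← mul_assoc, ← rpow_add hx0]
        ring_nf
    _ ≤ 1 * m ^ (-θ) := by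
        gcongr
        exact rpow_le_one_of_one_le_of_nonpos hx (by linarith)
    _ = m ^ (-θ) := one_mul _

lemma exists_pnat_rpow_le_polPolTerm (hb : 0 < b) (ha : 0 < a) (hm : 1 ≤ m) :
    ∃ n : ℕ+, (2 : ℝ) ^ (-(2 * b)) * m ^ (-(min b a / a)) ≤ polPolTerm b a m n := by
  have hm0 : 0 < m := by linarith
  rcases le_total b a with hba | hab
  · set y := m ^ (1 / (2 * a))
    obtain ⟨n, hyn, hn2y⟩ := exists_pnat_le_two_mul (one_le_rpow hm (by positivity) : 1 ≤ y)
    have hy0 : 0 < y := by positivity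
    have hy2a : y ^ (2 * a) = m := by
      rw [← rpow_mul hm0.le, one_div_mul_cancel (by positivity), rpow_one]
    have hmn : m ≤ (n : ℝ) ^ (2 * a) := hy2a ▸ rpow_le_rpow hy0.le hyn (by positivity)
    refine ⟨n, ?_⟩
    calc (2 : ℝ) ^ (-(2 * b)) * m ^ (-(min b a / a)) = (2 * y) ^ (-(2 * b)) := by
          rw [mul_rpow zero_le_two hy0.le, ← rpow_mul hm0.le, min_eq_left hba]
          congr 2
          field_simp
      _ ≤ (n : ℝ) ^ (-(2 * b)) := rpow_le_rpow_of_nonpos (by positivity) hn2y (by linarith)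
      _ = polPolTerm b a m n := by
          rw [polPolTerm, min_eq_left ((one_le_div hm0).2 hmn), mul_one]
  · refine ⟨1, ?_⟩
    have htwo : (2 : ℝ) ^ (-(2 * b)) ≤ 1 := rpow_le_one_of_one_le_of_nonpos one_le_two (by linarith)
    calc (2 : ℝ) ^ (-(2 * b)) * m ^ (-(min b a / a)) ≤ 1 * m ^ (-(1 : ℝ)) := by
          rw [min_eq_right hab, div_self ha.ne']
          gcongr
      _ = polPolTerm b a m ((1 : ℕ+) : ℕ) := by
          rw [polPolTerm, PNat.one_coe, Nat.cast_one, one_rpow, one_rpow,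
            min_eq_right ((div_le_one hm0).2 hm), rpow_neg_one, one_div, one_mul]

end polPolTerm

theorem rate_phi_pol_pol_general
    (s p a : ℝ) (hps : s < p) (ha : 0 < a)
    (ω γ α : ℤ → ℝ)
    (hω : ∀ j : ℤ, ω j = if j = 0 then 1 else |(j : ℝ)| ^ (2 * s))
    (hγ : ∀ j : ℤ, γ j = if j = 0 then 1 else |(j : ℝ)| ^ (2 * p))
    (hα : ∀ j : ℤ, α j = if j = 0 then 1 else |(j : ℝ)| ^ (-(2 * a)))
    (Φ : ℕ → ℝ)
    (hΦ : ∀ m : ℕ, Φ m = ⨆ k : ℕ+, ω k / γ k * min 1 (1 / (m * α k))) :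
    ∃ c C : ℝ, 0 < c ∧ c ≤ C ∧ ∀ m : ℕ, 1 ≤ m →
      c * (m : ℝ) ^ (-(min (p - s) a / a)) ≤ Φ m ∧
        Φ m ≤ C * (m : ℝ) ^ (-(min (p - s) a / a)) := by
  have hb : 0 < p - s := sub_pos.2 hps
  have hterm (m : ℕ) (k : ℕ+) :
      ω k / γ k * min 1 (1 / (m * α k)) = polPolTerm (p - s) a m ((k : ℕ) : ℝ) := by
    have hk : ((k : ℕ) : ℤ) ≠ 0 := by exact_mod_cast k.ne_zero
    have hk0 : (0 : ℝ) < (k : ℕ) := by exact_mod_cast k.pos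
    simp only [hω, hγ, hα, if_neg hk, Int.cast_natCast, abs_of_pos hk0, polPolTerm]
    rw [← rpow_sub hk0, rpow_neg hk0.le, one_div, mul_inv, inv_inv, mul_comm (m : ℝ)⁻¹,
      ← div_eq_mul_inv]
    ring_nf
  refine ⟨(2 : ℝ) ^ (-(2 * (p - s))), 1, by positivity,
    rpow_le_one_of_one_le_of_nonpos one_le_two (by linarith), fun m hm => ?_⟩
  have hm1 : (1 : ℝ) ≤ m := by exact_mod_cast hm
  have hθ0 : 0 ≤ min (p - s) a / a := by positivity
  have hθ1 : min (p - s) a / a ≤ 1 := (div_le_one ha).2 (min_le_right _ _)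
  have hθb : a * (min (p - s) a / a) ≤ p - s := by
    rw [mul_div_cancel₀ _ ha.ne']; exact min_le_left _ _
  have hle (k : ℕ+) : polPolTerm (p - s) a m ((k : ℕ) : ℝ) ≤ (m : ℝ) ^ (-(min (p - s) a / a)) :=
    polPolTerm_le_rpow (Nat.one_le_cast.2 k.pos) (by linarith) hθ0 hθ1 hθb
  simp only [hΦ, hterm, one_mul]
  obtain ⟨n, hn⟩ := exists_pnat_rpow_le_polPolTerm hb ha hm1
  exact ⟨hn.trans (le_ciSup ⟨_, Set.forall_mem_range.2 hle⟩ n), ciSup_le hle⟩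

/-- Rate in `m` for the (pol)-(pol) scenario: `Φ_m ≍ m^{-((p-s)∧a)/a}`. -/
theorem rate_phi_pol_pol
    (s p a : ℝ) (hs : 0 ≤ s) (hps : s < p) (ha : 0 < a)
    (ω γ α : ℤ → ℝ)
    (hω : ∀ j : ℤ, ω j = if j = 0 then 1 else |(j : ℝ)| ^ (2 * s))
    (hγ : ∀ j : ℤ, γ j = if j = 0 then 1 else |(j : ℝ)| ^ (2 * p))
    (hα : ∀ j : ℤ, α j = if j = 0 then 1 else |(j : ℝ)| ^ (-(2 * a)))
    (Φ : ℕ → ℝ)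
    (hΦ : ∀ m : ℕ, Φ m = ⨆ k : ℕ+, ω k / γ k * min 1 (1 / (m * α k))) :
    ∃ c C : ℝ, 0 < c ∧ c ≤ C ∧ ∀ m : ℕ, 1 ≤ m →
      c * (m : ℝ) ^ (-(min (p - s) a / a)) ≤ Φ m ∧
        Φ m ≤ C * (m : ℝ) ^ (-(min (p - s) a / a)) :=
  rate_phi_pol_pol_general s p a hps ha ω γ α hω hγ hα Φ hΦ
end
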